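/- arXiv:2205.02734 — 3 statements merged into one kernel-verified Lean document; each statement's English description precedes it below -/
import Mathlib

section
/- Let G be a locally finite simple graph and let f : ℕ → V(G) be injective with f(i) adjacent to f(i+1) for every i (a one-way infinite self-avoiding path starting at v = f(0)). Then there exists g : ℕ → V(G) with g(0) = f(0), with the range of g contained in the range of f, such that g(i) is adjacent to g(i+1) for all i, and such that g(i) is adjacent to g(j) only when |i − j| = 1 and g is injective (i.e., g is an infinite non-self-touching path starting at v). -/
/-!
Pull `G` back along `f` to a locally finite graph on `ℕ` containing the path `0, 1, 2, …`.
Starting at `0`, always jump to the largest neighbour of the current vertex. The jumps are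
strictly increasing, and a chord between the `i`-th and the `j`-th vertex with `i + 1 < j` is
impossible: the `j`-th vertex would then be a neighbour of the `i`-th one beyond the
`(i + 1)`-st, contradicting the maximality of that jump.
-/

namespace SimpleGraph

variable {H : SimpleGraph ℕ}

/-- Junk value `0` when `k` has no neighbours or infinitely many. -/
noncomputable def farthestNeighbor (H : SimpleGraph ℕ) (k : ℕ) : ℕ :=
  sSup (H.neighborSet k)

theorem le_farthestNeighbor {k m : ℕ} (hfin : (H.neighborSet k).Finite) (h : H.Adj k m) :
    m ≤ H.farthestNeighbor k :=
  le_csSup hfin.bddAbove h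

theorem adj_farthestNeighbor {k m : ℕ} (hfin : (H.neighborSet k).Finite) (h : H.Adj k m) :
    H.Adj k (H.farthestNeighbor k) :=
  Set.Nonempty.csSup_mem ⟨m, h⟩ hfin

noncomputable def greedyPath (H : SimpleGraph ℕ) (s n : ℕ) : ℕ :=
  H.farthestNeighbor^[n] s

theorem greedyPath_succ (s n : ℕ) :
    H.greedyPath s (n + 1) = H.farthestNeighbor (H.greedyPath s n) :=
  Function.iterate_succ_apply' _ _ _

section LocallyFiniteAlongPath

variable (hfin : ∀ k, (H.neighborSet k).Finite) (hpath : ∀ k, H.Adj k (k + 1))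
include hfin hpath

theorem greedyPath_strictMono (s : ℕ) : StrictMono (H.greedyPath s) :=
  strictMono_nat_of_lt_succ fun n => by
    rw [greedyPath_succ]
    exact le_farthestNeighbor (hfin _) (hpath _)

theorem greedyPath_adj_succ (s n : ℕ) : H.Adj (H.greedyPath s n) (H.greedyPath s (n + 1)) := by
  rw [greedyPath_succ]
  exact adj_farthestNeighbor (hfin _) (hpath _)

theorem not_adj_greedyPath_of_succ_lt (s : ℕ) {i j : ℕ} (hij : i + 1 < j) :
    ¬H.Adj (H.greedyPath s i) (H.greedyPath s j) := fun h =>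
  (greedyPath_strictMono hfin hpath s hij).not_ge <| by
    rw [greedyPath_succ]
    exact le_farthestNeighbor (hfin _) h

theorem eq_succ_or_eq_succ_of_adj_greedyPath (s : ℕ) {i j : ℕ}
    (h : H.Adj (H.greedyPath s i) (H.greedyPath s j)) : j = i + 1 ∨ i = j + 1 := by
  by_contra! hne
  rcases lt_trichotomy i j with hlt | rfl | hlt
  · exact not_adj_greedyPath_of_succ_lt hfin hpath s (by omega) h
  · exact H.irrefl h
  · exact not_adj_greedyPath_of_succ_lt hfin hpath s (by omega) h.symm

end LocallyFiniteAlongPath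

end SimpleGraph

/-- Oxbow-removal, infinite case (Lemma 4.1(b)): if `f : ℕ → V` is a one-way infinite
self-avoiding path of a locally finite simple graph `G` starting at `f 0`, then there is a
one-way infinite non-self-touching (induced) path `g` starting at `g 0 = f 0` whose vertices
all lie among the vertices of `f`: `g` is injective, consecutive vertices of `g` are adjacent,
and `g i` is adjacent to `g j` only when `|i - j| = 1`. -/
theorem exists_infinite_nonSelfTouching_path {V : Type*} (G : SimpleGraph V)
    (hlf : ∀ v : V, (G.neighborSet v).Finite)
    (f : ℕ → V) (hinj : Function.Injective f)
    (hadj : ∀ i : ℕ, G.Adj (f i) (f (i + 1))) :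
    ∃ g : ℕ → V,
      g 0 = f 0 ∧
      Set.range g ⊆ Set.range f ∧
      Function.Injective g ∧
      (∀ i : ℕ, G.Adj (g i) (g (i + 1))) ∧
      (∀ i j : ℕ, G.Adj (g i) (g j) → (j = i + 1 ∨ i = j + 1)) := by
  set H := G.comap f
  have hfin : ∀ k, (H.neighborSet k).Finite := fun k => (hlf (f k)).preimage hinj.injOn
  exact ⟨f ∘ H.greedyPath 0, rfl, Set.range_comp_subset_range _ _,
    hinj.comp (SimpleGraph.greedyPath_strictMono hfin hadj 0).injective,
    SimpleGraph.greedyPath_adj_succ hfin hadj 0,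
    fun _ _ => SimpleGraph.eq_succ_or_eq_succ_of_adj_greedyPath hfin hadj 0⟩
end

section
/- Let γ : ℝ → ℍ be an isometry (dist(γ(s), γ(t)) = |s − t| for all s, t), so that the image of γ is a doubly-infinite hyperbolic geodesic. If there exist s ≠ t with |γ(s)| = |γ(t)| (complex moduli), then |γ(u)| = |γ(s)| for every u ∈ ℝ; that is, the geodesic is contained in a Euclidean semicircle centered at 0, which is the geodesic perpendicular to the imaginary axis through those points. -/
/-!
Inversion in the circle `|z| = |γ s|` is a hyperbolic isometry fixing `γ s` and `γ t`, so it
carries `γ` to a unit-speed geodesic through the same two points. Such a geodesic is unique: `γ u`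
is determined by its distances to `γ s` and `γ t`, because the two hyperbolic circles of these
radii are Euclidean circles that are tangent (their radii add up to, or differ by, the distance of
their centres), and tangent circles meet in a single point. Hence the inversion fixes every `γ u`,
i.e. `|γ u| = |γ s|`.
-/

open Real
open scoped InnerProductSpace

theorem eq_of_dist_eq_of_tangent {E : Type*} [NormedAddCommGroup E] [InnerProductSpace ℝ E]
    {c₁ c₂ x y : E} {r₁ r₂ : ℝ} (hc : c₁ ≠ c₂)
    (htan : dist c₁ c₂ ^ 2 = (r₁ + r₂) ^ 2 ∨ dist c₁ c₂ ^ 2 = (r₁ - r₂) ^ 2)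
    (hx₁ : dist x c₁ = r₁) (hx₂ : dist x c₂ = r₂) (hy₁ : dist y c₁ = r₁) (hy₂ : dist y c₂ = r₂) :
    x = y := by
  have key : ∀ z, dist z c₁ = r₁ → dist z c₂ = r₂ → z - c₁ =
      ((r₁ ^ 2 + dist c₁ c₂ ^ 2 - r₂ ^ 2) / 2 / ⟪c₂ - c₁, c₂ - c₁⟫_ℝ) • (c₂ - c₁) := by
    intro z hz₁ hz₂
    rw [dist_eq_norm] at hz₁ hz₂
    rw [dist_comm, dist_eq_norm] at htan ⊢
    have hinner : ⟪c₂ - c₁, z - c₁⟫_ℝ = (r₁ ^ 2 + ‖c₂ - c₁‖ ^ 2 - r₂ ^ 2) / 2 := by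
      rw [real_inner_comm,
        real_inner_eq_norm_mul_self_add_norm_mul_self_sub_norm_sub_mul_self_div_two,
        sub_sub_sub_cancel_right, hz₁, hz₂]
      ring
    -- Tangency is exactly the equality case of Cauchy–Schwarz for `c₂ - c₁` and `z - c₁`.
    have hcs : ‖⟪c₂ - c₁, z - c₁⟫_ℝ‖ = ‖c₂ - c₁‖ * ‖z - c₁‖ := by
      rw [Real.norm_eq_abs, ← sq_eq_sq₀ (abs_nonneg _) (by positivity), sq_abs, mul_pow, hz₁,
        hinner]
      rcases htan with h | h <;> rw [h] <;> ring
    rw [← hinner]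
    exact Or.resolve_left (((norm_inner_eq_norm_tfae ℝ (c₂ - c₁) (z - c₁)).out 0 1).1 hcs)
      (sub_ne_zero.2 hc.symm)
  exact sub_left_injective ((key x hx₁ hx₂).trans (key y hy₁ hy₂).symm)

namespace UpperHalfPlane

theorem dist_coe_center_center_sq (p q : ℍ) (d₁ d₂ : ℝ) :
    dist (p.center d₁ : ℂ) (q.center d₂) ^ 2 = (p.im * sinh d₁ + q.im * sinh d₂) ^ 2 +
      2 * p.im * q.im * (cosh (dist p q) - cosh (d₁ + d₂)) := by
  have hne : 2 * p.im * q.im ≠ 0 := by positivity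
  simp only [Complex.dist_eq, Complex.sq_norm, Complex.normSq_apply, coe_re, coe_im, center_re,
    center_im, cosh_dist', mul_sub, mul_div_cancel₀ _ hne, Complex.sub_re, Complex.sub_im, cosh_add]
  linear_combination p.im ^ 2 * cosh_sq d₁ + q.im ^ 2 * cosh_sq d₂

theorem center_neg (z : ℍ) (r : ℝ) : z.center (-r) = z.center r :=
  ext_re_im rfl (by rw [center_im, center_im, cosh_neg])

theorem eq_of_center_eq {p q : ℍ} {d₁ d₂ : ℝ} (h : p.center d₁ = q.center d₂)
    (hr : p.im * sinh d₁ = q.im * sinh d₂) : p = q := by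
  have hre : p.re = q.re := by simpa using congrArg re h
  have him : p.im * cosh d₁ = q.im * cosh d₂ := by simpa using congrArg im h
  have him_sq : p.im ^ 2 = q.im ^ 2 := by
    linear_combination (p.im * cosh d₁ + q.im * cosh d₂) * him
      - (p.im * sinh d₁ + q.im * sinh d₂) * hr - p.im ^ 2 * cosh_sq d₁ + q.im ^ 2 * cosh_sq d₂
  exact ext_re_im hre ((sq_eq_sq₀ p.im_pos.le q.im_pos.le).1 him_sq)

theorem eq_of_dist_eq_of_dist_eq {p q z w : ℍ} {d₁ d₂ : ℝ} (hpq : p ≠ q)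
    (h : dist p q = d₁ + d₂ ∨ dist p q = |d₁ - d₂|) (hz₁ : dist z p = d₁) (hz₂ : dist z q = d₂)
    (hw₁ : dist w p = d₁) (hw₂ : dist w q = d₂) : z = w := by
  rw [dist_eq_iff_dist_coe_center_eq] at hz₁ hz₂ hw₁ hw₂
  have hc : (p.center d₁ : ℂ) ≠ q.center d₂ := fun hc =>
    hpq (eq_of_center_eq (coe_injective hc) (hz₁.symm.trans (hc ▸ hz₂)))
  refine UpperHalfPlane.ext (eq_of_dist_eq_of_tangent hc ?_ hz₁ hz₂ hw₁ hw₂)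
  rcases h with h | h
  · left
    rw [dist_coe_center_center_sq, h, sub_self, mul_zero, add_zero]
  · right
    rw [← center_neg q d₂, dist_coe_center_center_sq, h, ← sub_eq_add_neg, cosh_abs, sub_self,
      mul_zero, add_zero, sinh_neg, mul_neg, ← sub_eq_add_neg]

theorem apply_eq_of_dist_eq_abs_sub {γ γ' : ℝ → ℍ} (hγ : ∀ s t, dist (γ s) (γ t) = |s - t|)
    (hγ' : ∀ s t, dist (γ' s) (γ' t) = |s - t|) {s t : ℝ} (hst : s ≠ t) (hs : γ' s = γ s)
    (ht : γ' t = γ t) (u : ℝ) : γ' u = γ u := by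
  have hpq : γ s ≠ γ t := fun h => hst <| sub_eq_zero.1 <| abs_eq_zero.1 <| by
    rw [← hγ s t, h, dist_self]
  refine eq_of_dist_eq_of_dist_eq hpq ?_ (hs ▸ hγ' u s) (ht ▸ hγ' u t) (hγ u s) (hγ u t)
  rw [hγ s t]
  grind

variable {R : ℝ} (hR : 0 < R)

noncomputable def inversion (z : ℍ) : ℍ :=
  mk (EuclideanGeometry.inversion 0 R z) (by
    simp only [EuclideanGeometry.inversion, vsub_eq_sub, sub_zero, vadd_eq_add, add_zero,
      Complex.smul_im, smul_eq_mul, dist_zero_right]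
    exact mul_pos (pow_pos (div_pos hR (norm_pos_iff.2 z.ne_zero)) 2) z.im_pos)

theorem coe_inversion (z : ℍ) : (inversion hR z : ℂ) = EuclideanGeometry.inversion (0 : ℂ) R z :=
  rfl

theorem im_inversion (z : ℍ) : (inversion hR z).im = (R / ‖(z : ℂ)‖) ^ 2 * z.im := by
  simp only [inversion, mk_im, EuclideanGeometry.inversion, vsub_eq_sub, sub_zero, vadd_eq_add,
    add_zero, Complex.smul_im, smul_eq_mul, dist_zero_right, coe_im]

theorem isometry_inversion : Isometry (inversion hR) := Isometry.of_dist_eq fun z w => by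
  have hk : 0 < R ^ 2 / (‖(z : ℂ)‖ * ‖(w : ℂ)‖) := by
    have := z.ne_zero; have := w.ne_zero; positivity
  rw [dist_eq, dist_eq, coe_inversion, coe_inversion,
    EuclideanGeometry.dist_inversion_inversion z.ne_zero w.ne_zero, im_inversion, im_inversion,
    dist_zero_right, dist_zero_right,
    show (R / ‖(z : ℂ)‖) ^ 2 * z.im * ((R / ‖(w : ℂ)‖) ^ 2 * w.im)
      = (R ^ 2 / (‖(z : ℂ)‖ * ‖(w : ℂ)‖)) ^ 2 * (z.im * w.im) by ring,
    sqrt_mul (sq_nonneg _), sqrt_sq hk.le, mul_left_comm, mul_div_mul_left _ _ hk.ne']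

theorem inversion_eq_self_iff {z : ℍ} : inversion hR z = z ↔ ‖(z : ℂ)‖ = R := by
  refine ⟨fun h => ?_, fun h =>
    UpperHalfPlane.ext (EuclideanGeometry.inversion_of_mem_sphere (by simpa))⟩
  have hnorm := EuclideanGeometry.dist_inversion_center 0 (z : ℂ) R
  rw [← coe_inversion hR, h, dist_zero_right, eq_div_iff (norm_ne_zero_iff.2 z.ne_zero)] at hnorm
  exact (sq_eq_sq₀ (norm_nonneg _) hR.le).1 (by rw [sq, hnorm])

end UpperHalfPlane

open UpperHalfPlane

/-- If `γ : ℝ → ℍ` is an isometry (so its image is a doubly-infinite hyperbolic geodesic of the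
upper half-plane) and `|γ s| = |γ t|` for some `s ≠ t`, then `|γ u| = |γ s|` for every `u`:
the geodesic is contained in a Euclidean semicircle centred at `0`. -/
theorem geodesic_const_abs_of_two_eq (γ : ℝ → UpperHalfPlane)
    (hγ : ∀ s t : ℝ, dist (γ s) (γ t) = |s - t|)
    (s t : ℝ) (hst : s ≠ t)
    (habs : ‖(γ s : ℂ)‖ = ‖(γ t : ℂ)‖) :
    ∀ u : ℝ, ‖(γ u : ℂ)‖ = ‖(γ s : ℂ)‖ := by
  intro u
  have hR : 0 < ‖(γ s : ℂ)‖ := norm_pos_iff.2 (γ s).ne_zero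
  have hιγ (a b : ℝ) : dist (inversion hR (γ a)) (inversion hR (γ b)) = |a - b| :=
    ((isometry_inversion hR).dist_eq _ _).trans (hγ a b)
  have hfix : inversion hR (γ u) = γ u :=
    apply_eq_of_dist_eq_abs_sub (γ' := inversion hR ∘ γ) hγ hιγ hst
      ((inversion_eq_self_iff hR).2 rfl) ((inversion_eq_self_iff hR).2 habs.symm) u
  exact (inversion_eq_self_iff hR).1 hfix
end

section
/- Let γ : ℝ → ℍ be an isometry (dist(γ(s), γ(t)) = |s − t| for all s, t), let c = |γ(0)| (complex modulus), and suppose there exists u ∈ ℝ with |γ(u)| ≠ c. Then exactly one of the following holds: (i) |γ(t)| > c for all t > 0 and |γ(s)| < c for all s < 0; or (ii) |γ(t)| < c for all t > 0 and |γ(s)| > c for all s < 0. -/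
/-!
Send `z = x + iy ∈ ℍ` to the hyperboloid point `(1/y, x/y, |z|²/y)` of a Minkowski space of
signature `(+,-,-)`, in which `cosh (dist z w)` is the Minkowski product. If `z₀` lies on the
geodesic segment from `z₁` to `z₂` at distances `A` and `B` from its ends, the Gram matrix forces
`sinh B • z₁ + sinh A • z₂ = sinh (A + B) • z₀` in these coordinates. The linear functional
`(p, x, q) ↦ q - c² p` sends `z` to `(|z|² - c²)/y`, which has the sign of `|z| - c`; applied to
the identity with `c = |z₀|` it shows that `|z₁| - c` and `|z₂| - c` have opposite signs.
-/

open UpperHalfPlane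

section

open Real

noncomputable def minkowski (v w : ℝ × ℝ × ℝ) : ℝ :=
  (v.1 * w.2.2 + v.2.2 * w.1) / 2 - v.2.1 * w.2.1

noncomputable def hyperboloidPoint (z : ℍ) : ℝ × ℝ × ℝ :=
  (1 / z.im, z.re / z.im, (z.re ^ 2 + z.im ^ 2) / z.im)

theorem eq_zero_of_minkowski_eq_zero {v w : ℝ × ℝ × ℝ} (hv : 0 < minkowski v v)
    (hwv : minkowski w v = 0) (hww : minkowski w w = 0) : w = 0 := by
  obtain ⟨p, x, q⟩ := v
  obtain ⟨a, b, d⟩ := w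
  simp only [minkowski] at hv hwv hww
  have hdet : 0 < p * q - x ^ 2 := by linarith
  have hform : q * a ^ 2 - 2 * x * a * b + p * b ^ 2 = 0 := by
    linear_combination (-p) * hww + 2 * a * hwv
  have hb : b = 0 := by
    have hsq : (q * a - x * b) ^ 2 + (p * q - x ^ 2) * b ^ 2 = 0 := by
      linear_combination q * hform
    have : (p * q - x ^ 2) * b ^ 2 = 0 := by
      nlinarith [sq_nonneg (q * a - x * b), mul_nonneg hdet.le (sq_nonneg b)]
    simpa [hdet.ne'] using this
  have ha : a = 0 := by
    have hsq : (p * b - x * a) ^ 2 + (p * q - x ^ 2) * a ^ 2 = 0 := by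
      linear_combination p * hform
    have : (p * q - x ^ 2) * a ^ 2 = 0 := by
      nlinarith [sq_nonneg (p * b - x * a), mul_nonneg hdet.le (sq_nonneg a)]
    simpa [hdet.ne'] using this
  have hp : p ≠ 0 := by rintro rfl; nlinarith [sq_nonneg x]
  have hd : d = 0 := by subst ha hb; simpa [hp] using hwv
  simp [ha, hb, hd]

/-- The difference of the two sides is Minkowski-orthogonal to the timelike vector `v₀` and
isotropic, hence zero. -/
theorem sinh_smul_add_sinh_smul_eq {v₀ v₁ v₂ : ℝ × ℝ × ℝ} {A B : ℝ}
    (h₀ : minkowski v₀ v₀ = 1) (h₁ : minkowski v₁ v₁ = 1) (h₂ : minkowski v₂ v₂ = 1)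
    (h₁₀ : minkowski v₁ v₀ = cosh A) (h₀₂ : minkowski v₀ v₂ = cosh B)
    (h₁₂ : minkowski v₁ v₂ = cosh (A + B)) :
    sinh B • v₁ + sinh A • v₂ = sinh (A + B) • v₀ := by
  have hgram : sinh B ^ 2 + sinh A ^ 2 + sinh (A + B) ^ 2 + 2 * sinh A * sinh B * cosh (A + B)
      - 2 * sinh B * sinh (A + B) * cosh A - 2 * sinh A * sinh (A + B) * cosh B = 0 := by
    rw [sinh_add, cosh_add]
    linear_combination (-sinh A ^ 2) * cosh_sq B - sinh B ^ 2 * cosh_sq A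
  rw [← sub_eq_zero]
  obtain ⟨p, x, q⟩ := v₀
  obtain ⟨p₁, x₁, q₁⟩ := v₁
  obtain ⟨p₂, x₂, q₂⟩ := v₂
  simp only [minkowski] at *
  apply eq_zero_of_minkowski_eq_zero (v := (p, x, q)) (by simp only [minkowski]; linarith)
  · simp only [minkowski, Prod.smul_mk, Prod.mk_add_mk, Prod.mk_sub_mk, smul_eq_mul]
    linear_combination sinh B * h₁₀ + sinh A * h₀₂ - sinh (A + B) * h₀ - sinh_add A B
  · simp only [minkowski, Prod.smul_mk, Prod.mk_add_mk, Prod.mk_sub_mk, smul_eq_mul]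
    linear_combination sinh B ^ 2 * h₁ + sinh A ^ 2 * h₂ + sinh (A + B) ^ 2 * h₀
      + 2 * sinh A * sinh B * h₁₂ - 2 * sinh B * sinh (A + B) * h₁₀
      - 2 * sinh A * sinh (A + B) * h₀₂ + hgram

theorem cosh_dist_eq_minkowski (z w : ℍ) :
    cosh (dist z w) = minkowski (hyperboloidPoint z) (hyperboloidPoint w) := by
  have := z.im_pos.ne'
  have := w.im_pos.ne'
  rw [cosh_dist']
  simp only [minkowski, hyperboloidPoint]
  field_simp
  ring

theorem minkowski_hyperboloidPoint_self (z : ℍ) :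
    minkowski (hyperboloidPoint z) (hyperboloidPoint z) = 1 := by
  rw [← cosh_dist_eq_minkowski, dist_self, cosh_zero]

theorem Isometry.sinh_smul_hyperboloidPoint_add {γ : ℝ → ℍ} (hγ : Isometry γ) {s r t : ℝ}
    (hsr : s ≤ r) (hrt : r ≤ t) :
    sinh (t - r) • hyperboloidPoint (γ s) + sinh (r - s) • hyperboloidPoint (γ t) =
      sinh (t - s) • hyperboloidPoint (γ r) := by
  have hdist {a b : ℝ} (hab : a ≤ b) :
      minkowski (hyperboloidPoint (γ a)) (hyperboloidPoint (γ b)) = cosh (b - a) := by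
    rw [← cosh_dist_eq_minkowski, hγ.dist_eq, dist_comm, Real.dist_eq,
      abs_of_nonneg (sub_nonneg.2 hab)]
  rw [show t - s = (r - s) + (t - r) by ring]
  exact sinh_smul_add_sinh_smul_eq (minkowski_hyperboloidPoint_self _)
    (minkowski_hyperboloidPoint_self _) (minkowski_hyperboloidPoint_self _) (hdist hsr)
    (hdist hrt) (by rw [hdist (hsr.trans hrt)]; ring_nf)

theorem hyperboloidPoint_snd_snd_sub_mul_fst (z : ℍ) (c : ℝ) :
    (hyperboloidPoint z).2.2 - c ^ 2 * (hyperboloidPoint z).1 = (‖(z : ℂ)‖ ^ 2 - c ^ 2) / z.im := by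
  simp only [hyperboloidPoint, Complex.sq_norm, Complex.normSq_apply, coe_re, coe_im]
  ring

end

theorem sign_eq_neg_sign_of_mul_add_mul_eq_zero {a b x y : ℝ} (ha : 0 < a) (hb : 0 < b)
    (h : a * x + b * y = 0) : SignType.sign x = -SignType.sign y := by
  have hx : x = -(b / a) * y := by field_simp; linarith
  rw [hx, sign_mul, sign_neg (neg_neg_of_pos (div_pos hb ha)), neg_one_mul]

theorem sign_sq_norm_sub_sq_div_im (z : ℍ) {c : ℝ} (hc : 0 ≤ c) :
    SignType.sign ((‖(z : ℂ)‖ ^ 2 - c ^ 2) / z.im) = SignType.sign (‖(z : ℂ)‖ - c) := by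
  have hpos : 0 < (‖(z : ℂ)‖ + c) / z.im := by
    have := norm_pos_iff.2 z.ne_zero
    have := z.im_pos
    positivity
  rw [show (‖(z : ℂ)‖ ^ 2 - c ^ 2) / z.im = (‖(z : ℂ)‖ - c) * ((‖(z : ℂ)‖ + c) / z.im) by ring,
    sign_mul, sign_pos hpos, mul_one]

theorem Isometry.sign_norm_sub_eq_neg {γ : ℝ → ℍ} (hγ : Isometry γ) {s r t : ℝ}
    (hsr : s < r) (hrt : r < t) :
    SignType.sign (‖(γ s : ℂ)‖ - ‖(γ r : ℂ)‖) = -SignType.sign (‖(γ t : ℂ)‖ - ‖(γ r : ℂ)‖) := by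
  set c := ‖(γ r : ℂ)‖
  have hlin := congrArg (fun v : ℝ × ℝ × ℝ => v.2.2 - c ^ 2 * v.1)
    (hγ.sinh_smul_hyperboloidPoint_add hsr.le hrt.le)
  simp only [Prod.smul_fst, Prod.smul_snd, Prod.fst_add, Prod.snd_add, smul_eq_mul] at hlin
  have hcross : Real.sinh (t - r) * ((‖(γ s : ℂ)‖ ^ 2 - c ^ 2) / (γ s).im)
      + Real.sinh (r - s) * ((‖(γ t : ℂ)‖ ^ 2 - c ^ 2) / (γ t).im) = 0 := by
    rw [← hyperboloidPoint_snd_snd_sub_mul_fst, ← hyperboloidPoint_snd_snd_sub_mul_fst]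
    linear_combination hlin + Real.sinh (t - s) * hyperboloidPoint_snd_snd_sub_mul_fst (γ r) c
  rw [← sign_sq_norm_sub_sq_div_im _ (norm_nonneg _),
    ← sign_sq_norm_sub_sq_div_im _ (norm_nonneg _)]
  exact sign_eq_neg_sign_of_mul_add_mul_eq_zero (Real.sinh_pos_iff.2 (sub_pos.2 hrt))
    (Real.sinh_pos_iff.2 (sub_pos.2 hsr)) hcross

theorem xor_of_sign_sub_eq_neg_sign_sub {f : ℝ → ℝ} {c u : ℝ}
    (hf : ∀ s < 0, ∀ t > 0, SignType.sign (f s - c) = -SignType.sign (f t - c))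
    (hc : f 0 = c) (hu : f u ≠ c) :
    Xor ((∀ t, 0 < t → c < f t) ∧ (∀ s, s < 0 → f s < c))
      ((∀ t, 0 < t → f t < c) ∧ (∀ s, s < 0 → c < f s)) := by
  have hpos (t : ℝ) (ht : 0 < t) : SignType.sign (f t - c) = -SignType.sign (f (-1) - c) := by
    rw [hf (-1) (by norm_num) t ht, neg_neg]
  have hneg (s : ℝ) (hs : s < 0) : SignType.sign (f s - c) = SignType.sign (f (-1) - c) := by
    rw [hf s hs 1 one_pos, hpos 1 one_pos, neg_neg]
  rw [xor_iff_or_and_not_and]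
  refine ⟨?_, fun ⟨⟨h₁, _⟩, ⟨h₂, _⟩⟩ => lt_asymm (h₁ 1 one_pos) (h₂ 1 one_pos)⟩
  rcases hσ : SignType.sign (f (-1) - c) with _ | _ | _
  · refine absurd ?_ hu
    rcases lt_trichotomy u 0 with hu₀ | rfl | hu₀
    · rw [← sub_eq_zero, ← sign_eq_zero_iff, hneg u hu₀, hσ]; rfl
    · exact hc
    · rw [← sub_eq_zero, ← sign_eq_zero_iff, hpos u hu₀, hσ]; rfl
  · left
    refine ⟨fun t ht => sub_pos.1 (sign_eq_one_iff.1 ?_),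
      fun s hs => sub_neg.1 (sign_eq_neg_one_iff.1 ?_)⟩
    · rw [hpos t ht, hσ]; rfl
    · rw [hneg s hs, hσ]; rfl
  · right
    refine ⟨fun t ht => sub_neg.1 (sign_eq_neg_one_iff.1 ?_),
      fun s hs => sub_pos.1 (sign_eq_one_iff.1 ?_)⟩
    · rw [hpos t ht, hσ]; rfl
    · rw [hneg s hs, hσ]; rfl

/-- Let `γ : ℝ → ℍ` be an isometry into the hyperbolic upper half-plane, let `c = |γ 0|`, and
suppose `|γ u| ≠ c` for some `u`.  Then exactly one of the following holds:
(i) `|γ t| > c` for all `t > 0` and `|γ s| < c` for all `s < 0`; or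
(ii) `|γ t| < c` for all `t > 0` and `|γ s| > c` for all `s < 0`. -/
theorem geodesic_abs_dichotomy (γ : ℝ → UpperHalfPlane)
    (hγ : ∀ s t : ℝ, dist (γ s) (γ t) = |s - t|)
    (c : ℝ) (hc : c = ‖(γ 0 : ℂ)‖)
    (u : ℝ) (hu : ‖(γ u : ℂ)‖ ≠ c) :
    Xor'
      ((∀ t : ℝ, 0 < t → c < ‖(γ t : ℂ)‖) ∧
        (∀ s : ℝ, s < 0 → ‖(γ s : ℂ)‖ < c))
      ((∀ t : ℝ, 0 < t → ‖(γ t : ℂ)‖ < c) ∧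
        (∀ s : ℝ, s < 0 → c < ‖(γ s : ℂ)‖)) := by
  have hiso : Isometry γ := Isometry.of_dist_eq fun s t => by rw [hγ, Real.dist_eq]
  subst hc
  exact xor_of_sign_sub_eq_neg_sign_sub (fun s hs t ht => hiso.sign_norm_sub_eq_neg hs ht) rfl hu
end
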